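/- arXiv:2101.10543 — 5 statements merged into one kernel-verified Lean document; each statement's English description precedes it below -/
import Mathlib

section
/- Let n be a positive integer with n ≡ 1 (mod 4) and let d = (3^((n+1)/2) - 1)/2. Then in GF(3^n), the equation (x+1)^d + x^d = 1 has exactly one solution (namely x = 0), and the equation (x+1)^d + x^d = -1 has exactly one solution (namely x = -1). -/
/-!
Let `m = (n + 1) / 2`, so `q = 2 * d + 1 = 3 ^ m`, and write `y = x ^ d`, so that `y ^ 2 * x = x ^ q`.
If `(x + 1) ^ d + x ^ d = s` with `s = ±1`, then `(x + 1) ^ d = s - y`, and applying the same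
identity to `x + 1` together with `(x + 1) ^ q = x ^ q + 1` gives, in characteristic 3,
`(x + s * y) * (1 + s * y) = 0`. Hence `x ^ q = x` or `x ^ q = x ^ 3`, i.e. `x` or `x ^ (3 ^ (m - 1))`
is fixed by the `m`-th power of Frobenius. Since `n = 2 * m - 1`, both `m` and `m - 1` are coprime
to `n`, so `x` lies in the prime field `{0, 1, -1}`. There the equations are checked directly,
using that `d` is odd because `m` is.
-/

instance : Fact (Nat.Prime 3) := ⟨by norm_num⟩

theorem pow_pow_gcd_eq_self {M : Type*} [Monoid M] (p : ℕ) {a b : ℕ} {x : M}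
    (ha : x ^ p ^ a = x) (hb : x ^ p ^ b = x) : x ^ p ^ a.gcd b = x := by
  have periodic_iff : ∀ k, Function.IsPeriodicPt (· ^ p) k x ↔ x ^ p ^ k = x := fun k => by
    simp only [Function.IsPeriodicPt, Function.IsFixedPt, pow_iterate]
  exact (periodic_iff _).1 (((periodic_iff a).2 ha).gcd ((periodic_iff b).2 hb))

theorem pow_pow_eq_self_of_pow_pow_succ_eq {R : Type*} [CommRing R] [IsReduced R] (p : ℕ)
    [ExpChar R p] {a : ℕ} {x : R} (h : x ^ p ^ (a + 1) = x ^ p) : x ^ p ^ a = x :=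
  frobenius_inj R p (by rw [frobenius_def, frobenius_def, ← pow_mul, ← pow_succ, h])

namespace FiniteField

variable {K : Type*} [Field K] [Finite K] {p n : ℕ} {x : K}

theorem pow_char_eq_self_of_coprime (hK : Nat.card K = p ^ n) {a : ℕ} (ha : a.Coprime n)
    (hx : x ^ p ^ a = x) : x ^ p = x := by
  have : Fintype K := Fintype.ofFinite K
  have hn : x ^ p ^ n = x := by
    rw [← hK, Nat.card_eq_fintype_card]
    exact pow_card x
  simpa [Nat.Coprime.gcd_eq_one ha] using pow_pow_gcd_eq_self p hx hn

theorem pow_char_eq_self_of_pow_char_pow_eq_pow_char [ExpChar K p] (hK : Nat.card K = p ^ n)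
    {m : ℕ} (hm : (m - 1).Coprime n) (hx : x ^ p ^ m = x ^ p) : x ^ p = x := by
  cases m with
  | zero => simpa using hx.symm
  | succ a => exact pow_char_eq_self_of_coprime hK hm (pow_pow_eq_self_of_pow_pow_succ_eq p hx)

end FiniteField

theorem eq_zero_or_eq_one_or_eq_neg_one_of_pow_three_eq_self {R : Type*} [CommRing R]
    [NoZeroDivisors R] {x : R} (hx : x ^ 3 = x) : x = 0 ∨ x = 1 ∨ x = -1 := by
  have hfac : x * ((x - 1) * (x + 1)) = 0 := by linear_combination hx
  rcases mul_eq_zero.1 hfac with h0 | h1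
  · exact Or.inl h0
  rcases mul_eq_zero.1 h1 with h | h
  · exact Or.inr (Or.inl (sub_eq_zero.1 h))
  · exact Or.inr (Or.inr (eq_neg_of_add_eq_zero_left h))

section CharThree

variable {R : Type*} [CommRing R] [CharP R 3] {m d : ℕ}

theorem pow_three_pow_eq_self_or_eq_pow_three [NoZeroDivisors R] (hd : 2 * d + 1 = 3 ^ m)
    {x s : R} (hs : s ^ 2 = 1) (h : (x + 1) ^ d + x ^ d = s) :
    x ^ 3 ^ m = x ∨ x ^ 3 ^ m = x ^ 3 := by
  have pow_q : ∀ y : R, (y ^ d) ^ 2 * y = y ^ 3 ^ m := fun y => by rw [← hd]; ring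
  have h3 : (3 : R) = 0 := by exact_mod_cast CharP.cast_eq_zero R 3
  have frob : (x + 1) ^ 3 ^ m = x ^ 3 ^ m + 1 := by rw [add_pow_char_pow, one_pow]
  have hfac : (x + s * x ^ d) * (1 + s * x ^ d) = 0 := by
    have := pow_q (x + 1)
    rw [frob, ← pow_q x, show (x + 1) ^ d = s - x ^ d by linear_combination h] at this
    linear_combination this + ((x ^ d) ^ 2 - x - 1) * hs + s * x ^ d * (x + 1) * h3
  rcases mul_eq_zero.1 hfac with hy | hy
  · right
    rw [← pow_q x, show x ^ d = -(s * x) by linear_combination s * hy - x ^ d * hs]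
    linear_combination x ^ 3 * hs
  · left
    rw [← pow_q x, show x ^ d = -s by linear_combination s * hy - x ^ d * hs]
    linear_combination x * hs

theorem neg_one_ne_one_of_charP_three [Nontrivial R] : (-1 : R) ≠ 1 := by
  intro h
  have h2 : ((2 : ℕ) : R) = 0 := by push_cast; linear_combination -h
  exact absurd ((CharP.cast_eq_zero_iff R 3 2).1 h2) (by norm_num)

theorem one_add_one_pow_add_one_pow_eq_zero (hd : Odd d) : ((1 : R) + 1) ^ d + 1 ^ d = 0 := by
  have h3 : (3 : R) = 0 := by exact_mod_cast CharP.cast_eq_zero R 3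
  rw [show (1 : R) + 1 = -1 by linear_combination h3, hd.neg_one_pow, one_pow, neg_add_cancel]

end CharThree

namespace FiniteField

variable {K : Type*} [Field K] [Finite K] [CharP K 3] {n m d : ℕ}

theorem eq_zero_or_eq_one_or_eq_neg_one_of_add_one_pow_add_pow_eq (hK : Nat.card K = 3 ^ n)
    (hm : m.Coprime n) (hm' : (m - 1).Coprime n) (hd : 2 * d + 1 = 3 ^ m) {x s : K}
    (hs : s ^ 2 = 1) (h : (x + 1) ^ d + x ^ d = s) : x = 0 ∨ x = 1 ∨ x = -1 := by
  refine eq_zero_or_eq_one_or_eq_neg_one_of_pow_three_eq_self ?_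
  rcases pow_three_pow_eq_self_or_eq_pow_three hd hs h with hx | hx
  · exact pow_char_eq_self_of_coprime hK hm hx
  · exact pow_char_eq_self_of_pow_char_pow_eq_pow_char hK hm' hx

theorem setOf_add_one_pow_add_pow_eq_one_and_eq_neg_one (hK : Nat.card K = 3 ^ n)
    (hm : m.Coprime n) (hm' : (m - 1).Coprime n) (hd : 2 * d + 1 = 3 ^ m) (hodd : Odd d) :
    {x : K | (x + 1) ^ d + x ^ d = 1} = {0} ∧ {x : K | (x + 1) ^ d + x ^ d = -1} = {-1} := by
  have in_primeField := fun {x s : K} =>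
    eq_zero_or_eq_one_or_eq_neg_one_of_add_one_pow_add_pow_eq (x := x) (s := s) hK hm hm' hd
  have at_one := one_add_one_pow_add_one_pow_eq_zero (R := K) hodd
  have hne := neg_one_ne_one_of_charP_three (R := K)
  have hd0 : d ≠ 0 := hodd.pos.ne'
  constructor <;> ext x <;> simp only [Set.mem_ofPred_eq, Set.mem_singleton_iff] <;> constructor
  · intro h
    rcases in_primeField (by norm_num) h with rfl | rfl | rfl
    · rfl
    · exact absurd (at_one.symm.trans h) zero_ne_one
    · simp [hd0, hodd.neg_one_pow, hne] at h
  · rintro rfl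
    simp [hd0]
  · intro h
    rcases in_primeField (by norm_num) h with rfl | rfl | rfl
    · simp [hd0, hne.symm] at h
    · exact absurd (at_one.symm.trans h) (neg_ne_zero.2 one_ne_zero).symm
    · rfl
  · rintro rfl
    simp [hd0, hodd.neg_one_pow]

end FiniteField

theorem stmt_15_general (n : ℕ) (hcond : n % 4 = 1)
    (d : ℕ) (hd : d = (3 ^ ((n + 1) / 2) - 1) / 2) :
    {x : GaloisField 3 n | (x + 1) ^ d + x ^ d = 1} = {0} ∧
    {x : GaloisField 3 n | (x + 1) ^ d + x ^ d = -1} = {-1} := by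
  obtain ⟨k, rfl⟩ : ∃ k, n = 4 * k + 1 := ⟨n / 4, by omega⟩
  have pow_mod_four : 3 ^ (2 * k + 1) % 4 = 3 := by
    rw [pow_succ, pow_mul, Nat.mul_mod, Nat.pow_mod]
    norm_num
  rw [show (4 * k + 1 + 1) / 2 = 2 * k + 1 by omega] at hd
  generalize hq : 3 ^ (2 * k + 1) = q at hd pow_mod_four
  refine FiniteField.setOf_add_one_pow_add_pow_eq_one_and_eq_neg_one (m := 2 * k + 1)
    (GaloisField.card 3 _ (by omega)) ?_ ?_ (by omega) (Nat.odd_iff.2 (by omega))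
  · exact Nat.isCoprime_iff_coprime.1 ⟨2, -1, by push_cast; ring⟩
  · exact Nat.isCoprime_iff_coprime.1 ⟨-2, 1, by push_cast; ring⟩

theorem stmt_15 (n : ℕ) (hn : 0 < n) (hcond : n % 4 = 1)
    (d : ℕ) (hd : d = (3 ^ ((n + 1) / 2) - 1) / 2) :
    {x : GaloisField 3 n | (x + 1) ^ d + x ^ d = 1} = {0} ∧
    {x : GaloisField 3 n | (x + 1) ^ d + x ^ d = -1} = {-1} :=
  stmt_15_general n hcond d hd
end

section
/- Let n be a positive integer with n ≡ 1 (mod 4), let d = (3^(n+1) - 1)/8, and let b ∈ GF(3^n). Then there do not simultaneously exist x₁, x₂ ∈ GF(3^n) such that (x₁+1)^d + x₁^d = b, (x₂+1)^d + x₂^d = b, both x₁ and x₁+1 are nonzero squares in GF(3^n), and both x₂ and x₂+1 are nonsquares in GF(3^n). -/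
section CharThree

variable {F : Type*} [Field F] [CharP F 3]

theorem mul_sq_add_sq_injective (hF : ¬ IsSquare (-1 : F)) {b : F} (hb : b ≠ 0) :
    Function.Injective fun m : F ↦ m * (b ^ 2 + m ^ 2) := by
  intro m m' h
  have h3 : (3 : F) = 0 := by exact_mod_cast CharP.cast_eq_zero F 3
  have hcube : (m - m') * (b ^ 2 + (m - m') ^ 2) = 0 := by
    linear_combination h - m * m' * (m - m') * h3
  by_contra hm
  refine hF ⟨(m - m') / b, ?_⟩
  have := (mul_eq_zero.mp hcube).resolve_left (sub_ne_zero.mpr hm)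
  field_simp
  linear_combination -this

theorem add_mul_sub_mul_sq_add_sq_eq_neg_one {s t : F} (h : t ^ 4 - s ^ 4 = 1) :
    (s + t) * ((t - s) * ((s + t) ^ 2 + (t - s) ^ 2)) = -1 := by
  have h3 : (3 : F) = 0 := by exact_mod_cast CharP.cast_eq_zero F 3
  linear_combination 2 * h + h3

theorem eq_and_eq_of_pow_four_sub_pow_four_eq_one (hF : ¬ IsSquare (-1 : F)) {s t u v : F}
    (hst : t ^ 4 - s ^ 4 = 1) (huv : v ^ 4 - u ^ 4 = 1) (hsum : s + t = u + v) :
    s = u ∧ t = v := by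
  have h3 : (3 : F) = 0 := by exact_mod_cast CharP.cast_eq_zero F 3
  have cubic₁ := add_mul_sub_mul_sq_add_sq_eq_neg_one hst
  have cubic₂ := add_mul_sub_mul_sq_add_sq_eq_neg_one huv
  rw [← hsum] at cubic₂
  have hb : s + t ≠ 0 := left_ne_zero_of_mul (cubic₁ ▸ neg_ne_zero.mpr one_ne_zero)
  have hdiff : t - s = v - u :=
    mul_sq_add_sq_injective hF hb (mul_left_cancel₀ hb (cubic₁.trans cubic₂.symm))
  constructor
  · linear_combination hdiff - hsum + (s - u) * h3
  · linear_combination -hsum - hdiff + (t - v) * h3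

end CharThree

theorem pow_pow_four_eq_quadraticChar_mul {F : Type*} [Field F] [Fintype F] [DecidableEq F]
    (hF : ringChar F ≠ 2) {d : ℕ} (hd : 4 * d = 3 * (Fintype.card F / 2) + 1) (x : F) :
    (x ^ d) ^ 4 = quadraticChar F x * x := by
  rw [← pow_mul, mul_comm, hd, pow_succ, pow_mul', ← quadraticChar_eq_pow_of_char_ne_two' hF]
  rcases quadraticChar_isQuadratic F x with h | h | h <;> rw [h] <;> norm_num

theorem three_pow_succ_mod_sixteen {n : ℕ} (hn : n % 4 = 1) : 3 ^ (n + 1) % 16 = 9 := by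
  rw [show n + 1 = 4 * (n / 4) + 2 by omega, pow_add, pow_mul, Nat.mul_mod, Nat.pow_mod]
  norm_num

theorem stmt_16_general (n : ℕ) (hcond : n % 4 = 1)
    (d : ℕ) (hd : d = (3 ^ (n + 1) - 1) / 8) (b : GaloisField 3 n) :
    ¬ ∃ x₁ x₂ : GaloisField 3 n,
        (x₁ + 1) ^ d + x₁ ^ d = b ∧ (x₂ + 1) ^ d + x₂ ^ d = b ∧
        (x₁ ≠ 0 ∧ IsSquare x₁) ∧ (x₁ + 1 ≠ 0 ∧ IsSquare (x₁ + 1)) ∧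
        ¬ IsSquare x₂ ∧ ¬ IsSquare (x₂ + 1) := by
  classical
  rintro ⟨x₁, x₂, h₁, h₂, ⟨hx₁, hsq₁⟩, ⟨hx₁', hsq₁'⟩, hns₂, hns₂'⟩
  let := Fintype.ofFinite (GaloisField 3 n)
  have hcard : Fintype.card (GaloisField 3 n) = 3 ^ n := by
    rw [← Nat.card_eq_fintype_card, GaloisField.card 3 n (by omega)]
  have h16 := three_pow_succ_mod_sixteen hcond
  have h3q : 3 ^ (n + 1) = 3 * 3 ^ n := pow_succ' 3 n
  have hd4 : 4 * d = 3 * (Fintype.card (GaloisField 3 n) / 2) + 1 := by omega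
  have hd_odd : Odd d := Nat.odd_iff.mpr (by omega)
  have hF : ringChar (GaloisField 3 n) ≠ 2 := by rw [ringChar.eq (GaloisField 3 n) 3]; norm_num
  have hneg : ¬ IsSquare (-1 : GaloisField 3 n) := by
    rw [FiniteField.isSquare_neg_one_iff, hcard]; omega
  have χ₁ := (quadraticChar_one_iff_isSquare hx₁).mpr hsq₁
  have χ₁' := (quadraticChar_one_iff_isSquare hx₁').mpr hsq₁'
  have χ₂ := quadraticChar_neg_one_iff_not_isSquare.mpr hns₂
  have χ₂' := quadraticChar_neg_one_iff_not_isSquare.mpr hns₂'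
  have hfour := pow_pow_four_eq_quadraticChar_mul hF hd4
  have heq : x₁ ^ d = (x₂ + 1) ^ d := by
    refine (eq_and_eq_of_pow_four_sub_pow_four_eq_one hneg (t := (x₁ + 1) ^ d) (v := x₂ ^ d)
      ?_ ?_ ?_).1
    · rw [hfour, hfour, χ₁, χ₁']; ring
    · rw [hfour, hfour, χ₂, χ₂']; ring
    · linear_combination h₁ - h₂
  have := congrArg (quadraticChar (GaloisField 3 n)) heq
  rw [map_pow, map_pow, χ₁, χ₂', one_pow, hd_odd.neg_one_pow] at this
  norm_num at this

theorem stmt_16 (n : ℕ) (hn : 0 < n) (hcond : n % 4 = 1)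
    (d : ℕ) (hd : d = (3 ^ (n + 1) - 1) / 8) (b : GaloisField 3 n) :
    ¬ ∃ x₁ x₂ : GaloisField 3 n,
        (x₁ + 1) ^ d + x₁ ^ d = b ∧ (x₂ + 1) ^ d + x₂ ^ d = b ∧
        (x₁ ≠ 0 ∧ IsSquare x₁) ∧ (x₁ + 1 ≠ 0 ∧ IsSquare (x₁ + 1)) ∧
        ¬ IsSquare x₂ ∧ ¬ IsSquare (x₂ + 1) :=
  stmt_16_general n hcond d hd b
end

section
/- Let n be an odd positive integer, let d = (3^n + 1)/4 + (3^n - 1)/2, and let b ∈ GF(3^n) be nonzero. If x ∈ GF(3^n) \ {0, -1} satisfies (x+1)^d + x^d = b and both x and x+1 are nonzero squares in GF(3^n), then x = (b⁻¹ - b)². If instead both x and x+1 are nonsquares in GF(3^n), then x = -(b + b⁻¹)². -/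
theorem Nat.three_pow_mod_four_of_odd {n : ℕ} (hn : Odd n) : 3 ^ n % 4 = 3 := by
  obtain ⟨k, rfl⟩ := hn
  rw [pow_succ, pow_mul, Nat.mul_mod, Nat.pow_mod]
  norm_num

theorem sq_pow_div_four_of_mod_four_eq_three {M : Type*} [Monoid M] {m : ℕ} (hm : m % 4 = 3)
    (y : M) : (y ^ ((m + 1) / 4)) ^ 2 = y ^ (m / 2) * y := by
  rw [← pow_mul, ← pow_succ]
  congr 1
  omega

theorem eq_mul_sq_of_eq_mul_add {F : Type*} [Field F] [CharP F 3] {x b u v ε : F}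
    (hε : ε ^ 2 = 1) (hu : u ^ 2 = ε * x) (hv : v ^ 2 = ε * (x + 1)) (hb : b = ε * (u + v)) :
    x = ε * (b⁻¹ - ε * b) ^ 2 := by
  have h3 : (3 : F) = 0 := by exact_mod_cast CharP.cast_eq_zero F 3
  have hbinv : b⁻¹ = v - u :=
    inv_eq_of_mul_eq_one_right (by rw [hb]; linear_combination ε * (hv - hu) + hε)
  have hroot : b⁻¹ - ε * b = u := by
    rw [hbinv, hb]
    linear_combination (-(u + v)) * hε - u * h3
  rw [hroot]
  linear_combination (-ε) * hu - x * hε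

theorem eq_mul_sq_of_pow_add_pow {F : Type*} [Field F] [CharP F 3] {m : ℕ} (hm : m % 4 = 3)
    {x b ε : F} (hε : ε ^ 2 = 1) (hx : x ^ (m / 2) = ε) (hx1 : (x + 1) ^ (m / 2) = ε)
    (hsol : (x + 1) ^ ((m + 1) / 4 + m / 2) + x ^ ((m + 1) / 4 + m / 2) = b) :
    x = ε * (b⁻¹ - ε * b) ^ 2 := by
  refine eq_mul_sq_of_eq_mul_add hε (u := x ^ ((m + 1) / 4)) (v := (x + 1) ^ ((m + 1) / 4))
    ?_ ?_ ?_
  · rw [sq_pow_div_four_of_mod_four_eq_three hm, hx]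
  · rw [sq_pow_div_four_of_mod_four_eq_three hm, hx1]
  · rw [← hsol, pow_add, pow_add, hx, hx1]
    ring

theorem FiniteField.pow_card_div_two_eq_neg_one_of_not_isSquare {F : Type*} [Field F] [Fintype F]
    (hF : ringChar F ≠ 2) {a : F} (ha : a ≠ 0) (h : ¬IsSquare a) :
    a ^ (Fintype.card F / 2) = -1 :=
  (pow_dichotomy hF ha).resolve_left (mt (isSquare_iff hF ha).2 h)

theorem stmt_17_general (n : ℕ) (hn : 0 < n) (hodd : Odd n)
    (d : ℕ) (hd : d = (3 ^ n + 1) / 4 + (3 ^ n - 1) / 2)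
    (b : GaloisField 3 n)
    (x : GaloisField 3 n) (hx0 : x ≠ 0) (hx1 : x ≠ -1)
    (hsol : (x + 1) ^ d + x ^ d = b) :
    ((IsSquare x ∧ x + 1 ≠ 0 ∧ IsSquare (x + 1)) → x = (b⁻¹ - b) ^ 2) ∧
    ((¬ IsSquare x ∧ ¬ IsSquare (x + 1)) → x = -(b + b⁻¹) ^ 2) := by
  let _ : Fintype (GaloisField 3 n) := Fintype.ofFinite _
  have hcard : Fintype.card (GaloisField 3 n) = 3 ^ n := by
    rw [← Nat.card_eq_fintype_card, GaloisField.card 3 n hn.ne']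
  have hq := Nat.three_pow_mod_four_of_odd hodd
  have hchar : ringChar (GaloisField 3 n) ≠ 2 := by
    rw [ringChar.eq (GaloisField 3 n) 3]; norm_num
  have hx1' : x + 1 ≠ 0 := fun h ↦ hx1 (eq_neg_of_add_eq_zero_left h)
  rw [hd, show (3 ^ n - 1) / 2 = 3 ^ n / 2 by omega, ← hcard] at hsol
  rw [← hcard] at hq
  constructor
  · rintro ⟨hsx, -, hsx1⟩
    simpa using eq_mul_sq_of_pow_add_pow hq (one_pow 2)
      ((FiniteField.isSquare_iff hchar hx0).1 hsx) ((FiniteField.isSquare_iff hchar hx1').1 hsx1)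
      hsol
  · rintro ⟨hsx, hsx1⟩
    linear_combination eq_mul_sq_of_pow_add_pow hq (by norm_num)
      (FiniteField.pow_card_div_two_eq_neg_one_of_not_isSquare hchar hx0 hsx)
      (FiniteField.pow_card_div_two_eq_neg_one_of_not_isSquare hchar hx1' hsx1) hsol

theorem stmt_17 (n : ℕ) (hn : 0 < n) (hodd : Odd n)
    (d : ℕ) (hd : d = (3 ^ n + 1) / 4 + (3 ^ n - 1) / 2)
    (b : GaloisField 3 n) (hb : b ≠ 0)
    (x : GaloisField 3 n) (hx0 : x ≠ 0) (hx1 : x ≠ -1)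
    (hsol : (x + 1) ^ d + x ^ d = b) :
    ((IsSquare x ∧ x + 1 ≠ 0 ∧ IsSquare (x + 1)) → x = (b⁻¹ - b) ^ 2) ∧
    ((¬ IsSquare x ∧ ¬ IsSquare (x + 1)) → x = -(b + b⁻¹) ^ 2) :=
  stmt_17_general n hn hodd d hd b x hx0 hx1 hsol
end

section
/- Let n be an odd positive integer. Then there do not exist nonzero square elements γ₁, γ₂, γ₃, γ₄ in GF(3^n) satisfying γ₁ + γ₂ = γ₃ + γ₄ and γ₁² + γ₂² + γ₃² + γ₄² = 0. -/
lemma pow_odd_mod_four_of_mod_four_eq_three {p n : ℕ} (hp : p % 4 = 3) (hn : Odd n) :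
    p ^ n % 4 = 3 := by
  obtain ⟨k, rfl⟩ := hn
  rw [pow_succ, pow_mul, Nat.mul_mod, Nat.pow_mod, Nat.pow_mod p, hp]
  norm_num

lemma GaloisField.not_isSquare_neg_one {p n : ℕ} [Fact p.Prime] (hp : p % 4 = 3)
    (hn : Odd n) : ¬ IsSquare (-1 : GaloisField p n) := by
  have : Fintype (GaloisField p n) := Fintype.ofFinite _
  rw [FiniteField.isSquare_neg_one_iff, not_not, Fintype.card_eq_nat_card,
    GaloisField.card p n hn.pos.ne']
  exact pow_odd_mod_four_of_mod_four_eq_three hp hn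

lemma isSquare_neg_one_of_isSquare_neg {F : Type*} [Field F] {x : F} (hx0 : x ≠ 0)
    (hx : IsSquare x) (hnx : IsSquare (-x)) : IsSquare (-1 : F) := by
  simpa [neg_div, div_self hx0] using hnx.div hx

lemma sq_sq_add_sq_sq_add_sq_add_sq_eq_of_charP_three {R : Type*} [CommRing R] [CharP R 3]
    (a b c : R) :
    (a ^ 2) ^ 2 + (b ^ 2) ^ 2 + c ^ 2 + (a ^ 2 + b ^ 2 - c) ^ 2 =
      -((c + (a - b) ^ 2) * (c + (a + b) ^ 2)) := by
  have h3 : (3 : R) = 0 := by exact_mod_cast CharP.cast_eq_zero R 3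
  linear_combination (a ^ 4 + b ^ 4 + c ^ 2) * h3

lemma isSquare_neg_one_of_charP_three {F : Type*} [Field F] [CharP F 3] {γ₁ γ₂ γ₃ γ₄ : F}
    (h₁ : IsSquare γ₁) (h₂ : IsSquare γ₂) (h₃ : IsSquare γ₃) (h₃0 : γ₃ ≠ 0)
    (hsum : γ₁ + γ₂ = γ₃ + γ₄) (hsq : γ₁ ^ 2 + γ₂ ^ 2 + γ₃ ^ 2 + γ₄ ^ 2 = 0) :
    IsSquare (-1 : F) := by
  obtain ⟨a, rfl⟩ := h₁
  obtain ⟨b, rfl⟩ := h₂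
  obtain rfl : γ₄ = a ^ 2 + b ^ 2 - γ₃ := by linear_combination -hsum
  rw [← sq, ← sq, sq_sq_add_sq_sq_add_sq_add_sq_eq_of_charP_three, neg_eq_zero] at hsq
  refine isSquare_neg_one_of_isSquare_neg h₃0 h₃ ?_
  rcases mul_eq_zero.mp hsq with h | h
  · exact ⟨a - b, by linear_combination -h⟩
  · exact ⟨a + b, by linear_combination -h⟩

theorem stmt_18_general (n : ℕ) (hodd : Odd n) :
    ¬ ∃ γ₁ γ₂ γ₃ γ₄ : GaloisField 3 n,
        (γ₁ ≠ 0 ∧ IsSquare γ₁) ∧ (γ₂ ≠ 0 ∧ IsSquare γ₂) ∧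
        (γ₃ ≠ 0 ∧ IsSquare γ₃) ∧ (γ₄ ≠ 0 ∧ IsSquare γ₄) ∧
        γ₁ + γ₂ = γ₃ + γ₄ ∧ γ₁ ^ 2 + γ₂ ^ 2 + γ₃ ^ 2 + γ₄ ^ 2 = 0 := by
  rintro ⟨γ₁, γ₂, γ₃, γ₄, ⟨-, h₁⟩, ⟨-, h₂⟩, ⟨h₃0, h₃⟩, -, hsum, hsq⟩
  exact GaloisField.not_isSquare_neg_one (by norm_num) hodd
    (isSquare_neg_one_of_charP_three h₁ h₂ h₃ h₃0 hsum hsq)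

theorem stmt_18 (n : ℕ) (hn : 0 < n) (hodd : Odd n) :
    ¬ ∃ γ₁ γ₂ γ₃ γ₄ : GaloisField 3 n,
        (γ₁ ≠ 0 ∧ IsSquare γ₁) ∧ (γ₂ ≠ 0 ∧ IsSquare γ₂) ∧
        (γ₃ ≠ 0 ∧ IsSquare γ₃) ∧ (γ₄ ≠ 0 ∧ IsSquare γ₄) ∧
        γ₁ + γ₂ = γ₃ + γ₄ ∧ γ₁ ^ 2 + γ₂ ^ 2 + γ₃ ^ 2 + γ₄ ^ 2 = 0 :=
  stmt_18_general n hodd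
end

section
/- Let n be an odd positive integer and let d = (3^n + 1)/4 + (3^n - 1)/2. Then in GF(3^n), the equation (x+1)^d + x^d = 1 has exactly two solutions (namely x = 0 and x = -1), and the equation (x+1)^d + x^d = -1 has exactly one solution (namely x = 1). -/
theorem three_pow_mod_eight_of_odd {n : ℕ} (hn : Odd n) : 3 ^ n % 8 = 3 := by
  obtain ⟨k, rfl⟩ := hn
  rw [pow_succ, pow_mul, Nat.mul_mod, Nat.pow_mod]
  norm_num

theorem eq_neg_of_add_eq_of_mul_sq_sub_mul_sq_eq_one {K : Type*} [Field K] [CharP K 3]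
    {s t u v c : K} (hs : s = 1 ∨ s = -1) (ht : t = 1 ∨ t = -1) (hc : c ^ 2 = 1)
    (hu : u ≠ 0) (hv : v ≠ 0) (hsum : u + v = c) (hsq : t * v ^ 2 - s * u ^ 2 = 1) :
    s = 1 ∧ u = -c := by
  have h3 : (3 : K) = 0 := by exact_mod_cast CharP.cast_eq_zero K 3
  have h2 : (2 : K) ≠ 0 := fun h ↦ one_ne_zero (by linear_combination h3 - h : (1 : K) = 0)
  obtain rfl : v = c - u := by linear_combination hsum
  rcases hs with rfl | rfl <;> rcases ht with rfl | rfl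
  · have : 2 * (c * u) = 0 := by linear_combination -hsq + hc
    exact absurd this (mul_ne_zero h2 (mul_ne_zero (by rintro rfl; simp at hc) hu))
  · have hsq' : (u + c) ^ 2 = 0 := by linear_combination hsq + 2 * hc + (u ^ 2 + 1) * h3
    exact ⟨rfl, by linear_combination pow_eq_zero_iff two_ne_zero |>.mp hsq'⟩
  · have : u * (u - c) = 0 := by linear_combination -hsq + hc + (u ^ 2 - c * u) * h3
    exact absurd (by linear_combination -(mul_eq_zero.mp this).resolve_left hu) hv
  · have hcu : c * u = 1 := by linear_combination -hsq - hc + (c * u - 1) * h3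
    exact absurd (by linear_combination u * hc - c * hcu) hv

section FiniteField

variable {F : Type*} [Field F] [Fintype F] {d : ℕ}

theorem sq_pow_eq_pow_card_div_two_mul
    (hd : 2 * d = Fintype.card F - 1 + (Fintype.card F / 2 + 1)) {y : F} (hy : y ≠ 0) :
    (y ^ d) ^ 2 = y ^ (Fintype.card F / 2) * y := by
  rw [← pow_mul, mul_comm, hd, pow_add, FiniteField.pow_card_sub_one_eq_one y hy, one_mul,
    pow_succ]

theorem eq_one_of_pow_add_pow_eq [CharP F 3]
    (hd : 2 * d = Fintype.card F - 1 + (Fintype.card F / 2 + 1)) {x c : F} (hc : c ^ 2 = 1)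
    (hx : x ≠ 0) (hx1 : x + 1 ≠ 0) (h : (x + 1) ^ d + x ^ d = c) : x = 1 ∧ c = -1 := by
  have hchar : ringChar F ≠ 2 := by rw [ringChar.eq F 3]; decide
  have hs := FiniteField.pow_dichotomy hchar hx
  have ht := FiniteField.pow_dichotomy hchar hx1
  have hs2 : (x ^ (Fintype.card F / 2)) ^ 2 = 1 := by rcases hs with h | h <;> simp [h]
  have ht2 : ((x + 1) ^ (Fintype.card F / 2)) ^ 2 = 1 := by rcases ht with h | h <;> simp [h]
  have hu := sq_pow_eq_pow_card_div_two_mul hd hx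
  have hv := sq_pow_eq_pow_card_div_two_mul hd hx1
  obtain ⟨hs1, hxc⟩ := eq_neg_of_add_eq_of_mul_sq_sub_mul_sq_eq_one hs ht hc
    (pow_ne_zero d hx) (pow_ne_zero d hx1) (by rw [← h, add_comm])
    (by rw [hu, hv]; linear_combination (x + 1) * ht2 - x * hs2)
  have hx_one : x = 1 := by rw [hs1, one_mul, hxc, neg_sq, hc] at hu; exact hu.symm
  subst hx_one
  rw [one_pow] at hxc
  exact ⟨rfl, by linear_combination hxc⟩

end FiniteField

theorem stmt_19_general (n : ℕ) (hodd : Odd n)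
    (d : ℕ) (hd : d = (3 ^ n + 1) / 4 + (3 ^ n - 1) / 2) :
    {x : GaloisField 3 n | (x + 1) ^ d + x ^ d = 1} = {0, -1} ∧
    {x : GaloisField 3 n | (x + 1) ^ d + x ^ d = -1} = {1} := by
  set F := GaloisField 3 n
  let _ := Fintype.ofFinite F
  have hcard : Fintype.card F = 3 ^ n := by
    rw [← Nat.card_eq_fintype_card]; exact GaloisField.card 3 n hodd.pos.ne'
  have h8 := three_pow_mod_eight_of_odd hodd
  have hd2 : 2 * d = Fintype.card F - 1 + (Fintype.card F / 2 + 1) := by rw [hcard]; omega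
  have heven : Even d := Nat.even_iff.mpr (by omega)
  have hd0 : d ≠ 0 := by omega
  have h3 : (3 : F) = 0 := by exact_mod_cast CharP.cast_eq_zero F 3
  have hne : (-1 : F) ≠ 1 := Ring.neg_one_ne_one_of_char_ne_two (by rw [ringChar.eq F 3]; decide)
  have hf0 : ((0 : F) + 1) ^ d + 0 ^ d = 1 := by simp [hd0]
  have hfm1 : ((-1 : F) + 1) ^ d + (-1) ^ d = 1 := by simp [hd0, heven.neg_one_pow]
  have hf1 : ((1 : F) + 1) ^ d + 1 ^ d = -1 := by
    rw [show (1 + 1 : F) = -1 by linear_combination h3, heven.neg_one_pow, one_pow]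
    linear_combination h3
  have hsol {x c : F} (hc : c ^ 2 = 1) (h : (x + 1) ^ d + x ^ d = c) :
      x = 0 ∨ x = -1 ∨ (x = 1 ∧ c = -1) := by
    rw [or_iff_not_imp_left, or_iff_not_imp_left]
    intro hx0 hx1
    exact eq_one_of_pow_add_pow_eq hd2 hc hx0 (fun h ↦ hx1 (by linear_combination h)) h
  constructor
  · ext x
    refine ⟨fun h ↦ ?_, by rintro (rfl | rfl) <;> assumption⟩
    rcases hsol (one_pow 2) h with h | h | ⟨-, h⟩
    exacts [.inl h, .inr h, absurd h.symm hne]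
  · ext x
    refine ⟨fun h ↦ ?_, by rintro rfl; exact hf1⟩
    rcases hsol (by simp) h with rfl | rfl | ⟨h, -⟩
    exacts [absurd (hf0.symm.trans h) hne.symm, absurd (hfm1.symm.trans h) hne.symm, h]

theorem stmt_19 (n : ℕ) (hn : 0 < n) (hodd : Odd n)
    (d : ℕ) (hd : d = (3 ^ n + 1) / 4 + (3 ^ n - 1) / 2) :
    {x : GaloisField 3 n | (x + 1) ^ d + x ^ d = 1} = {0, -1} ∧
    {x : GaloisField 3 n | (x + 1) ^ d + x ^ d = -1} = {1} :=
  stmt_19_general n hodd d hd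
end
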